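/- Let X : ℕ → Set_* be a tower of pointed sets (a diagram over the directed poset ℕ) and let 0 → A → B → C → 0 be a short exact sequence of abelian groups. Then the induced sequences 0 → G(X,A) → G(X,B) → G(X,C) and 0 → H(X,A) → H(X,B) → H(X,C) are exact. If moreover X satisfies the Mittag-Leffler condition, then 0 → G(X,A) → G(X,B) → G(X,C) → 0 and 0 → H(X,A) → H(X,B) → H(X,C) → 0 are exact. -/

import Mathlib

open CategoryTheory Finsupp

universe u v w

/-- The smash product `Y ∧ A` of a pointed set `(Y, y0)` with an abelian group `A`:
the group of finitely supported functions `Y →₀ A` vanishing at the basepoint,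
i.e. `⊕_{y ∈ Y∖{y0}} A`. -/
def Smash (Y : Type u) (y0 : Y) (A : Type v) [AddCommGroup A] :
    AddSubgroup (Y →₀ A) where
  carrier := {f | f y0 = 0}
  add_mem' := by
    intro a b ha hb
    simp only [Set.mem_setOf_eq, Finsupp.add_apply] at *
    rw [ha, hb, add_zero]
  zero_mem' := by simp
  neg_mem' := by
    intro a ha
    simp only [Set.mem_setOf_eq, Finsupp.neg_apply] at *
    rw [ha, neg_zero]

theorem mem_smash {Y : Type u} {y0 : Y} {A : Type v} [AddCommGroup A] {f : Y →₀ A} :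
    f ∈ Smash Y y0 A ↔ f y0 = 0 := Iff.rfl

/-- The pushforward homomorphism `g_* : Y∧A → Z∧A` induced by a (pointed) map
`g : Y → Z`: `(g_* f)(z) = ∑_{y : g y = z} f y` for `z ≠ z0`, and `(g_* f)(z0) = 0`. -/
noncomputable def smashMap {Y : Type u} {Z : Type v} (y0 : Y) (z0 : Z) (g : Y → Z)
    (A : Type w) [AddCommGroup A] :
    Smash Y y0 A →+ Smash Z z0 A where
  toFun f := ⟨(Finsupp.mapDomain g f.1).erase z0, Finsupp.erase_same⟩
  map_zero' := by
    apply Subtype.ext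
    simp
  map_add' f₁ f₂ := by
    apply Subtype.ext
    show (Finsupp.mapDomain g ((f₁ : Y →₀ A) + (f₂ : Y →₀ A))).erase z0 = _
    rw [Finsupp.mapDomain_add, Finsupp.erase_add]
    rfl

theorem smashMap_comp {Y : Type u} {Z : Type v} {W : Type w} (y0 : Y) (z0 : Z) (w0 : W)
    (g : Y → Z) (g' : Z → W) (hg' : g' z0 = w0)
    (A : Type*) [AddCommGroup A] (f : Smash Y y0 A) :
    smashMap z0 w0 g' A (smashMap y0 z0 g A f) = smashMap y0 w0 (g' ∘ g) A f := by
  classical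
  apply Subtype.ext
  show (Finsupp.mapDomain g' ((Finsupp.mapDomain g f.1).erase z0)).erase w0
      = (Finsupp.mapDomain (g' ∘ g) f.1).erase w0
  rw [Finsupp.mapDomain_comp]
  set h := Finsupp.mapDomain g f.1 with hh
  have key : Finsupp.mapDomain g' (h.erase z0)
      = Finsupp.mapDomain g' h - Finsupp.single w0 (h z0) := by
    have h1 : h.erase z0 = h - Finsupp.single z0 (h z0) := by
      ext a
      by_cases ha : a = z0
      · subst ha; simp
      · simp [Finsupp.erase_ne ha, Finsupp.single_apply, Ne.symm ha, ha]
    rw [h1]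
    have h2 := map_sub (Finsupp.mapDomain.addMonoidHom g') h (Finsupp.single z0 (h z0))
    simp only [Finsupp.mapDomain.addMonoidHom_apply] at h2
    rw [h2, Finsupp.mapDomain_single, hg']
  rw [key]
  ext a
  by_cases ha : a = w0
  · subst ha; simp
  · simp [Finsupp.erase_ne ha, Finsupp.single_apply, Ne.symm ha, ha]
/-- The inverse limit of a diagram of pointed sets, as a subset of the product. -/
def plim {D : Type u} [Category.{v} D] (F : D ⥤ Pointed.{w}) :
    Set (∀ d : D, (F.obj d).X) :=
  {x | ∀ ⦃d d' : D⦄ (u : d ⟶ d'), (F.map u).toFun (x d) = x d'}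

/-- The basepoint of the inverse limit of a diagram of pointed sets. -/
def plimPt {D : Type u} [Category.{v} D] (F : D ⥤ Pointed.{w}) : plim F :=
  ⟨fun d => (F.obj d).point, fun _ _ u => (F.map u).map_point⟩

/-- The inverse limit `lim_D (X ∧ A)` of the diagram of abelian groups obtained by
smashing a diagram of pointed sets with an abelian group `A`. -/
noncomputable def glim {D : Type u} [Category.{v} D] (F : D ⥤ Pointed.{w})
    (A : Type*) [AddCommGroup A] :
    AddSubgroup (∀ d : D, Smash (F.obj d).X (F.obj d).point A) where
  carrier := {h | ∀ ⦃d d' : D⦄ (u : d ⟶ d'),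
      smashMap (F.obj d).point (F.obj d').point (F.map u).toFun A (h d) = h d'}
  add_mem' := by
    intro a b ha hb d d' u
    rw [Pi.add_apply, map_add, ha u, hb u]
    rfl
  zero_mem' := by
    intro d d' u
    rw [Pi.zero_apply, map_zero]
    rfl
  neg_mem' := by
    intro a ha d d' u
    rw [Pi.neg_apply, map_neg, ha u]
    rfl

/-- The natural map `ρ : (lim_D X) ∧ A → lim_D (X ∧ A)`, whose component at `d`
is induced by the projection `lim_D X → X d`. -/
noncomputable def rho {D : Type u} [Category.{v} D] (F : D ⥤ Pointed.{w})
    (A : Type*) [AddCommGroup A] :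
    Smash (plim F) (plimPt F) A →+ glim F A where
  toFun f := ⟨fun d => smashMap (plimPt F) (F.obj d).point (fun x => x.1 d) A f, by
    intro d d' u
    rw [smashMap_comp (plimPt F) (F.obj d).point (F.obj d').point _ _ (F.map u).map_point A f]
    have : ((F.map u).toFun ∘ fun x : plim F => x.1 d) = fun x : plim F => x.1 d' := by
      funext x
      exact x.2 u
    rw [this]⟩
  map_zero' := by
    apply Subtype.ext
    funext d
    show smashMap (plimPt F) (F.obj d).point (fun x => x.1 d) A 0 = (0 : Smash _ _ A)
    exact map_zero _
  map_add' f₁ f₂ := by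
    apply Subtype.ext
    funext d
    show smashMap (plimPt F) (F.obj d).point (fun x => x.1 d) A (f₁ + f₂)
        = smashMap (plimPt F) (F.obj d).point (fun x => x.1 d) A f₁
          + smashMap (plimPt F) (F.obj d).point (fun x => x.1 d) A f₂
    exact map_add _ f₁ f₂
/-- The homomorphism `Y ∧ α : Y∧A → Y∧B` induced by a group homomorphism `α : A →+ B`
(postcomposition with `α`). -/
noncomputable def smashRange {Y : Type u} (y0 : Y) {A : Type v} {B : Type w}
    [AddCommGroup A] [AddCommGroup B] (α : A →+ B) :
    Smash Y y0 A →+ Smash Y y0 B where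
  toFun f := ⟨Finsupp.mapRange α α.map_zero f.1, by
    rw [mem_smash, Finsupp.mapRange_apply, mem_smash.mp f.2, α.map_zero]⟩
  map_zero' := by
    apply Subtype.ext
    show Finsupp.mapRange α α.map_zero ((0 : Smash Y y0 A) : Y →₀ A) = 0
    simp
  map_add' f₁ f₂ := by
    apply Subtype.ext
    show Finsupp.mapRange α α.map_zero ((f₁ : Y →₀ A) + (f₂ : Y →₀ A)) = _
    rw [Finsupp.mapRange_add α.map_add]
    rfl

theorem smashMap_smashRange {Y : Type u} {Z : Type v} (y0 : Y) (z0 : Z) (g : Y → Z)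
    {A B : Type*} [AddCommGroup A] [AddCommGroup B] (α : A →+ B) (f : Smash Y y0 A) :
    smashMap y0 z0 g B (smashRange y0 α f) = smashRange z0 α (smashMap y0 z0 g A f) := by
  classical
  apply Subtype.ext
  show (Finsupp.mapDomain g (Finsupp.mapRange α α.map_zero f.1)).erase z0
      = Finsupp.mapRange α α.map_zero ((Finsupp.mapDomain g f.1).erase z0)
  rw [Finsupp.mapDomain_mapRange g f.1 α α.map_zero α.map_add]
  ext a
  by_cases ha : a = z0
  · subst ha
    simp [Finsupp.mapRange_apply]
  · simp [Finsupp.erase_ne ha, Finsupp.mapRange_apply]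

/-- The induced homomorphism `G(X, α) : lim_D (X∧A) → lim_D (X∧B)` for `α : A →+ B`. -/
noncomputable def glimMap {D : Type u} [Category.{v} D] (F : D ⥤ Pointed.{w})
    {A B : Type*} [AddCommGroup A] [AddCommGroup B] (α : A →+ B) :
    glim F A →+ glim F B where
  toFun h := ⟨fun d => smashRange (F.obj d).point α (h.1 d), by
    intro d d' u
    rw [smashMap_smashRange, h.2 u]⟩
  map_zero' := by
    apply Subtype.ext
    funext d
    show smashRange (F.obj d).point α ((0 : glim F A).1 d) = (0 : Smash _ _ B)
    rw [show ((0 : glim F A).1 d) = 0 from rfl, map_zero]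
  map_add' h₁ h₂ := by
    apply Subtype.ext
    funext d
    show smashRange (F.obj d).point α ((h₁ + h₂).1 d)
        = smashRange (F.obj d).point α (h₁.1 d) + smashRange (F.obj d).point α (h₂.1 d)
    rw [show ((h₁ + h₂ : glim F A).1 d) = h₁.1 d + h₂.1 d from rfl, map_add]

theorem glimMap_rho {D : Type u} [Category.{v} D] (F : D ⥤ Pointed.{w})
    {A B : Type*} [AddCommGroup A] [AddCommGroup B] (α : A →+ B)
    (f : Smash (plim F) (plimPt F) A) :
    glimMap F α (rho F A f) = rho F B (smashRange (plimPt F) α f) := by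
  apply Subtype.ext
  funext d
  show smashRange (F.obj d).point α (smashMap (plimPt F) (F.obj d).point (fun x => x.1 d) A f)
      = smashMap (plimPt F) (F.obj d).point (fun x => x.1 d) B (smashRange (plimPt F) α f)
  rw [smashMap_smashRange]

/-- The induced homomorphism `H(X, α) : H(X,A) → H(X,B)` on the cokernels of the
natural maps `ρ`, for `α : A →+ B`. -/
noncomputable def Hmap {D : Type u} [Category.{v} D] (F : D ⥤ Pointed.{w})
    {A B : Type*} [AddCommGroup A] [AddCommGroup B] (α : A →+ B) :
    (↥(glim F A) ⧸ (rho F A).range) →+ (↥(glim F B) ⧸ (rho F B).range) :=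
  QuotientAddGroup.map _ _ (glimMap F α) (by
    rintro x ⟨f, rfl⟩
    exact ⟨smashRange (plimPt F) α f, (glimMap_rho F α f).symm⟩)

/-- The Mittag-Leffler condition for a diagram of pointed sets indexed by a
preordered set `T` (with structure maps `X(s) → X(t)` for `t ≤ s`): for every `t`
there is `s ≥ t` such that for every `r ≥ s` the images of `X(s)` and of `X(r)`
in `X(t)` coincide. -/
def MittagLeffler {T : Type u} [Preorder T] (F : Tᵒᵖ ⥤ Pointed.{w}) : Prop :=
  ∀ t : T, ∃ s : T, ∃ hts : t ≤ s, ∀ r : T, ∀ hsr : s ≤ r,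
    Set.range (F.map (homOfLE hts).op).toFun
      = Set.range (F.map (homOfLE (hts.trans hsr)).op).toFun

/-!
`Y ∧ -` is exact and limits are left exact, so `0 → G(X,A) → G(X,B) → G(X,C)` is exact. For `H`,
an element `f` of `(lim X) ∧ B` is detected at a single level: the finitely many points of `lim X`
involved are already separated in some `X t`, so if `ρ f` takes values in `α A`, so does `f`;
exactness in the middle is then a diagram chase.

Given `c ∈ G(X, C)` and Mittag-Leffler, lift each `c t` to `X t ∧ B` with support in the eventual
image of `X` at `t`. Such lifts exist at every level, and each one is the image of such a lift at
any `s ≥ t`: the image of an arbitrary one differs from it by an element of `X t ∧ A` supported in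
the eventual image, which comes from `X s ∧ A` because eventual images map onto each other. Along ℕ
these choices assemble into a preimage of `c` in `G(X, B)`.
-/

section Smash

variable {Y Z A B C : Type*} [AddCommGroup A] [AddCommGroup B] [AddCommGroup C]

theorem coe_smashMap (y0 : Y) (z0 : Z) (g : Y → Z) (f : Smash Y y0 A) :
    (smashMap y0 z0 g A f : Z →₀ A) = (Finsupp.mapDomain g (f : Y →₀ A)).erase z0 := rfl

theorem smashRange_apply (y0 : Y) (α : A →+ B) (f : Smash Y y0 A) (y : Y) :
    (smashRange y0 α f : Y →₀ B) y = α ((f : Y →₀ A) y) := rfl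

theorem smashMap_id (y0 : Y) (f : Smash Y y0 A) : smashMap y0 y0 id A f = f := by
  ext1
  rw [coe_smashMap, Finsupp.mapDomain_id, Finsupp.erase_of_notMem_support]
  exact Finsupp.notMem_support_iff.mpr f.2

theorem smashRange_injective (y0 : Y) {α : A →+ B} (hα : Function.Injective α) :
    Function.Injective (smashRange y0 α : Smash Y y0 A → Smash Y y0 B) := fun _ _ h =>
  Subtype.ext (Finsupp.mapRange_injective α α.map_zero hα (congrArg Subtype.val h))

theorem exists_smashRange_eq (y0 : Y) (β : B →+ C) (f : Smash Y y0 C)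
    (hf : ∀ y, (f : Y →₀ C) y ∈ Set.range β) :
    ∃ g : Smash Y y0 B, smashRange y0 β g = f := by
  classical
  let σ : C → B := fun c => if c = 0 then 0 else Function.invFun β c
  have hσ : ∀ c ∈ Set.range β, β (σ c) = c := fun c hc => by
    by_cases h : c = 0
    · simp [σ, h]
    · simp only [σ, if_neg h]
      exact Function.invFun_eq hc
  refine ⟨⟨Finsupp.mapRange σ (by simp [σ]) f, by simp [mem_smash, mem_smash.mp f.2, σ]⟩, ?_⟩
  ext y
  exact hσ _ (hf y)

theorem smashRange_surjective (y0 : Y) {β : B →+ C} (hβ : Function.Surjective β) :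
    Function.Surjective (smashRange y0 β : Smash Y y0 B → Smash Y y0 C) := fun f =>
  exists_smashRange_eq y0 β f fun _ => hβ _

theorem smashRange_exact (y0 : Y) {α : A →+ B} {β : B →+ C} (hαβ : Function.Exact α β) :
    Function.Exact (smashRange y0 α) (smashRange y0 β) := by
  intro f
  constructor
  · intro hf
    refine exists_smashRange_eq y0 α f fun y => (hαβ _).mp ?_
    rw [← smashRange_apply, hf]
    rfl
  · rintro ⟨g, rfl⟩
    ext y
    exact hαβ.apply_apply_eq_zero _

theorem smashMap_apply_of_injOn (y0 : Y) (z0 : Z) {g : Y → Z} (hg : g y0 = z0)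
    (f : Smash Y y0 A) {y : Y}
    (hinj : Set.InjOn g (insert y0 (insert y ↑(f : Y →₀ A).support))) :
    (smashMap y0 z0 g A f : Z →₀ A) (g y) = (f : Y →₀ A) y := by
  by_cases hy : y = y0
  · subst hy hg
    exact (smashMap y (g y) g A f).2.trans f.2.symm
  have hgy : g y ≠ z0 := fun h => hy (hinj (by simp) (by simp) (h.trans hg.symm))
  rw [coe_smashMap, Finsupp.erase_ne hgy]
  exact Finsupp.mapDomain_apply' _ _ (fun x hx => by simp [hx]) hinj (by simp)

noncomputable def smashSupported (y0 : Y) (A : Type*) [AddCommGroup A] (S : Set Y) :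
    AddSubgroup (Smash Y y0 A) :=
  (Finsupp.supported A ℤ S).toAddSubgroup.comap (Smash Y y0 A).subtype

theorem mem_smashSupported {y0 : Y} {S : Set Y} {f : Smash Y y0 A} :
    f ∈ smashSupported y0 A S ↔ ↑(f : Y →₀ A).support ⊆ S :=
  Finsupp.mem_supported ℤ _

theorem smashMap_mem_smashSupported (y0 : Y) (z0 : Z) (g : Y → Z) {S : Set Y}
    {f : Smash Y y0 A} (hf : f ∈ smashSupported y0 A S) :
    smashMap y0 z0 g A f ∈ smashSupported z0 A (g '' S) := by
  classical
  rw [mem_smashSupported] at hf ⊢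
  intro z hz
  rw [coe_smashMap, Finsupp.support_erase, Finset.coe_erase] at hz
  obtain ⟨y, hy, rfl⟩ := Finset.mem_image.mp (Finsupp.mapDomain_support hz.1)
  exact Set.mem_image_of_mem g (hf hy)

theorem exists_smashMap_eq_of_mem_smashSupported (y0 : Y) (z0 : Z) {g : Y → Z}
    (hg : g y0 = z0) {S : Set Y} {k : Smash Z z0 A} (hk : k ∈ smashSupported z0 A (g '' S)) :
    ∃ f ∈ smashSupported y0 A S, smashMap y0 z0 g A f = k := by
  classical
  have hk' : (k : Z →₀ A) ∈ (Finsupp.supported A ℤ S).map (Finsupp.lmapDomain A ℤ g) := by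
    rw [Finsupp.lmapDomain_supported]
    exact hk
  obtain ⟨l, hl, hlk⟩ := hk'
  refine ⟨⟨l.erase y0, Finsupp.erase_same⟩, mem_smashSupported.mpr ?_, ?_⟩
  · rw [Finsupp.support_erase, Finset.coe_erase]
    exact Set.sdiff_subset.trans hl
  · have h := congrArg (fun l => (Finsupp.mapDomain g l).erase z0)
      (Finsupp.erase_add_single y0 l)
    simp only [Finsupp.mapDomain_add, Finsupp.mapDomain_single, hg, Finsupp.erase_add,
      Finsupp.erase_single, add_zero] at h
    ext1
    rw [coe_smashMap, h]
    exact (congrArg _ hlk).trans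
      (Finsupp.erase_of_notMem_support (Finsupp.notMem_support_iff.mpr k.2))

theorem smashRange_mem_smashSupported (y0 : Y) (α : A →+ B) {S : Set Y} {f : Smash Y y0 A}
    (hf : f ∈ smashSupported y0 A S) : smashRange y0 α f ∈ smashSupported y0 B S :=
  mem_smashSupported.mpr <| (Finset.coe_subset.mpr
    (Finsupp.support_mapRange (hf := α.map_zero))).trans (mem_smashSupported.mp hf)

theorem mem_smashSupported_of_smashRange (y0 : Y) {α : A →+ B} (hα : Function.Injective α)
    {S : Set Y} {f : Smash Y y0 A} (hf : smashRange y0 α f ∈ smashSupported y0 B S) :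
    f ∈ smashSupported y0 A S := by
  rwa [mem_smashSupported, smashRange, AddMonoidHom.coe_mk, ZeroHom.coe_mk,
    Finsupp.support_mapRange_of_injective _ _ hα] at hf

end Smash

section Limit

variable {D : Type*} [Category D] (F : D ⥤ Pointed.{w})
  {A B C : Type*} [AddCommGroup A] [AddCommGroup B] [AddCommGroup C]

theorem glimMap_injective {α : A →+ B} (hα : Function.Injective α) :
    Function.Injective (glimMap F α) := fun _ _ h =>
  Subtype.ext (funext fun d => smashRange_injective _ hα (congrFun (congrArg Subtype.val h) d))

theorem glimMap_exact {α : A →+ B} {β : B →+ C} (hα : Function.Injective α)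
    (hαβ : Function.Exact α β) : Function.Exact (glimMap F α) (glimMap F β) := by
  intro h
  constructor
  · intro hh
    choose g hg using fun d => ((smashRange_exact _ hαβ) (h.1 d)).mp
      (congrFun (congrArg Subtype.val hh) d)
    refine ⟨⟨g, fun d d' u => smashRange_injective _ hα ?_⟩, Subtype.ext (funext hg)⟩
    rw [← smashMap_smashRange, hg, hg]
    exact h.2 u
  · rintro ⟨g, rfl⟩
    exact Subtype.ext (funext fun d => (smashRange_exact _ hαβ).apply_apply_eq_zero (g.1 d))

theorem Hmap_mk (α : A →+ B) (x : glim F A) :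
    Hmap F α (QuotientAddGroup.mk x) = QuotientAddGroup.mk (glimMap F α x) := rfl

theorem Hmap_exact {α : A →+ B} {β : B →+ C} (hα : Function.Injective α)
    (hαβ : Function.Exact α β) (hβ : Function.Surjective β) :
    Function.Exact (Hmap F α) (Hmap F β) := by
  intro q
  constructor
  · intro hq
    obtain ⟨h, rfl⟩ := QuotientAddGroup.mk_surjective q
    obtain ⟨f, hf⟩ := (QuotientAddGroup.eq_zero_iff _).mp hq
    obtain ⟨f', rfl⟩ := smashRange_surjective (plimPt F) hβ f
    obtain ⟨g, hg⟩ := (glimMap_exact F hα hαβ (h - rho F B f')).mp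
      (by rw [map_sub, glimMap_rho, hf, sub_self])
    refine ⟨QuotientAddGroup.mk g, ?_⟩
    rw [Hmap_mk, hg, QuotientAddGroup.mk_sub,
      (QuotientAddGroup.eq_zero_iff _).mpr (AddMonoidHom.mem_range.mpr ⟨f', rfl⟩), sub_zero]
  · rintro ⟨p, rfl⟩
    obtain ⟨g, rfl⟩ := QuotientAddGroup.mk_surjective p
    rw [Hmap_mk, Hmap_mk, (glimMap_exact F hα hαβ _).mpr ⟨g, rfl⟩]
    rfl

theorem Hmap_surjective {β : B →+ C} (hβ : Function.Surjective (glimMap F β)) :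
    Function.Surjective (Hmap F β) := by
  intro q
  obtain ⟨h, rfl⟩ := QuotientAddGroup.mk_surjective q
  obtain ⟨g, rfl⟩ := hβ h
  exact ⟨_, Hmap_mk F β g⟩

end Limit

section Directed

open Opposite

variable {T : Type*} [Preorder T] (F : Tᵒᵖ ⥤ Pointed.{w})
  {A B : Type*} [AddCommGroup A] [AddCommGroup B]

theorem plim_proj_ne_of_le {x y : plim F} {s t : T} (hst : s ≤ t)
    (h : x.1 (op s) ≠ y.1 (op s)) : x.1 (op t) ≠ y.1 (op t) := fun he =>
  h (by rw [← x.2 (homOfLE hst).op, ← y.2 (homOfLE hst).op, he])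

variable [Nonempty T] [IsDirectedOrder T]

theorem exists_injOn_plim_proj (s : Finset (plim F)) :
    ∃ t : T, Set.InjOn (fun x : plim F => x.1 (op t)) s := by
  classical
  have hsep : ∀ p : plim F × plim F, ∃ t : T, p.1 ≠ p.2 → p.1.1 (op t) ≠ p.2.1 (op t) := by
    rintro ⟨x, y⟩
    by_cases hxy : x = y
    · exact ⟨Classical.arbitrary T, fun h => (h hxy).elim⟩
    · obtain ⟨d, hd⟩ := Function.ne_iff.mp (Subtype.coe_ne_coe.mpr hxy)
      exact ⟨d.unop, fun _ => hd⟩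
  choose τ hτ using hsep
  obtain ⟨t, ht⟩ := Finset.exists_le ((s ×ˢ s).image τ)
  refine ⟨t, fun x hx y hy hxy => by_contra fun hne => ?_⟩
  have hle : τ (x, y) ≤ t :=
    ht _ (Finset.mem_image_of_mem τ (Finset.mem_product.mpr ⟨hx, hy⟩))
  exact plim_proj_ne_of_le F hle (hτ (x, y) hne) hxy

theorem exists_rho_apply_eq (f : Smash (plim F) (plimPt F) A) (y : plim F) :
    ∃ t : T, ((rho F A f).1 (op t) : (F.obj (op t)).X →₀ A) (y.1 (op t))
      = (f : plim F →₀ A) y := by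
  classical
  obtain ⟨t, ht⟩ :=
    exists_injOn_plim_proj F (insert (plimPt F) (insert y (f : plim F →₀ A).support))
  rw [Finset.coe_insert, Finset.coe_insert] at ht
  exact ⟨t, smashMap_apply_of_injOn _ _ rfl f ht⟩

theorem mem_range_rho_of_glimMap_mem_range {α : A →+ B} (hα : Function.Injective α)
    {x : glim F A} (hx : glimMap F α x ∈ (rho F B).range) : x ∈ (rho F A).range := by
  obtain ⟨f, hf⟩ := hx
  obtain ⟨g, rfl⟩ : ∃ g, smashRange (plimPt F) α g = f := by
    refine exists_smashRange_eq _ α f fun y => ?_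
    obtain ⟨t, ht⟩ := exists_rho_apply_eq F f y
    rw [← ht, hf]
    exact ⟨_, rfl⟩
  exact ⟨g, glimMap_injective F hα (by rw [glimMap_rho, hf])⟩

theorem Hmap_injective {α : A →+ B} (hα : Function.Injective α) :
    Function.Injective (Hmap F α) := by
  rw [injective_iff_map_eq_zero]
  intro q hq
  obtain ⟨x, rfl⟩ := QuotientAddGroup.mk_surjective q
  rw [Hmap_mk, QuotientAddGroup.eq_zero_iff] at hq
  exact (QuotientAddGroup.eq_zero_iff x).mpr (mem_range_rho_of_glimMap_mem_range F hα hq)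

end Directed

open Opposite in
theorem MittagLeffler.isMittagLeffler {T : Type*} [Preorder T] [IsDirectedOrder T]
    {F : Tᵒᵖ ⥤ Pointed.{w}} (hF : MittagLeffler F) : (F ⋙ forget Pointed).IsMittagLeffler := by
  intro j
  obtain ⟨s, hts, hs⟩ := hF j.unop
  refine ⟨op s, (homOfLE hts).op, fun k g => ?_⟩
  obtain ⟨r, hsr, hkr⟩ := exists_ge_ge s k.unop
  show Set.range (F.map (homOfLE hts).op).toFun ⊆ Set.range (F.map g).toFun
  rw [hs r hsr]
  rintro _ ⟨x, rfl⟩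
  refine ⟨(F.map (homOfLE hkr).op).toFun x, ?_⟩
  rw [← Function.comp_apply (f := (F.map g).toFun), ← Pointed.Hom.comp_toFun', ← F.map_comp]
  rfl

section MittagLeffler

variable {J : Type*} [Category J] {F : J ⥤ Pointed.{w}}
  {A B C : Type*} [AddCommGroup A] [AddCommGroup B] [AddCommGroup C]

variable (F) in
def eventualLifts (β : B →+ C) (c : glim F C) (j : J) :
    Set (Smash (F.obj j).X (F.obj j).point B) :=
  {b | smashRange _ β b = c.1 j ∧
    b ∈ smashSupported _ B ((F ⋙ forget Pointed).eventualRange j)}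

theorem eventualLifts_nonempty (hF : (F ⋙ forget Pointed).IsMittagLeffler) {β : B →+ C}
    (hβ : Function.Surjective β) (c : glim F C) (j : J) : (eventualLifts F β c j).Nonempty := by
  obtain ⟨i, f, hf⟩ := (F ⋙ forget Pointed).isMittagLeffler_iff_eventualRange.1 hF j
  obtain ⟨b, hb⟩ := smashRange_surjective _ hβ (c.1 i)
  refine ⟨smashMap _ _ (F.map f).toFun B b, ?_, ?_⟩
  · rw [← smashMap_smashRange, hb]
    exact c.2 f
  · rw [hf, ← Set.image_univ]
    exact smashMap_mem_smashSupported _ _ _ (mem_smashSupported.mpr (Set.subset_univ _))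

theorem exists_smashMap_eq_of_mem_eventualLifts [IsCofilteredOrEmpty J]
    (hF : (F ⋙ forget Pointed).IsMittagLeffler) {α : A →+ B} {β : B →+ C}
    (hα : Function.Injective α) (hαβ : Function.Exact α β) (hβ : Function.Surjective β)
    (c : glim F C) {i j : J} (f : i ⟶ j) {b : Smash (F.obj j).X (F.obj j).point B}
    (hb : b ∈ eventualLifts F β c j) :
    ∃ b' ∈ eventualLifts F β c i, smashMap _ _ (F.map f).toFun B b' = b := by
  have hE := hF.eq_image_eventualRange (F ⋙ forget Pointed) f
  obtain ⟨b'', hb''β, hb''E⟩ := eventualLifts_nonempty hF hβ c i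
  obtain ⟨e, he⟩ := (smashRange_exact _ hαβ (smashMap _ _ (F.map f).toFun B b'' - b)).mp
    (by rw [map_sub, ← smashMap_smashRange, hb''β, hb.1, c.2 f, sub_self])
  have heE :
      e ∈ smashSupported _ A ((F.map f).toFun '' (F ⋙ forget Pointed).eventualRange i) := by
    refine mem_smashSupported_of_smashRange _ hα (he ▸ sub_mem ?_ (hE ▸ hb.2))
    exact smashMap_mem_smashSupported _ _ _ hb''E
  obtain ⟨e', he'E, rfl⟩ := exists_smashMap_eq_of_mem_smashSupported _ _ (F.map f).map_point heE
  refine ⟨b'' - smashRange _ α e',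
    ⟨?_, sub_mem hb''E (smashRange_mem_smashSupported _ α he'E)⟩, ?_⟩
  · rw [map_sub, hb''β, (smashRange_exact _ hαβ).apply_apply_eq_zero, sub_zero]
  · rw [map_sub, smashMap_smashRange, he, sub_sub_cancel]

end MittagLeffler

theorem exists_seq_of_forall_exists_succ {X : ℕ → Type*} (P : ∀ n, Set (X n))
    (r : ∀ n, X (n + 1) → X n) (h0 : (P 0).Nonempty)
    (hP : ∀ n, ∀ x ∈ P n, ∃ y ∈ P (n + 1), r n y = x) :
    ∃ x : ∀ n, X n, (∀ n, x n ∈ P n) ∧ ∀ n, r n (x (n + 1)) = x n := by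
  choose g hgP hgr using hP
  let x : ∀ n, P n := fun n =>
    Nat.rec ⟨h0.some, h0.some_mem⟩ (fun n y => ⟨g n y y.2, hgP n y y.2⟩) n
  exact ⟨fun n => (x n).1, fun n => (x n).2, fun n => hgr n (x n).1 (x n).2⟩

open Opposite in
theorem mem_glim_of_succ (F : ℕᵒᵖ ⥤ Pointed.{w}) {A : Type*} [AddCommGroup A]
    {x : ∀ d, Smash (F.obj d).X (F.obj d).point A}
    (hx : ∀ n, smashMap _ _ (F.map (homOfLE n.le_succ).op).toFun A (x (op (n + 1))) = x (op n)) :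
    x ∈ glim F A := by
  have key : ∀ m n (h : m ≤ n),
      smashMap _ _ (F.map (homOfLE h).op).toFun A (x (op n)) = x (op m) := by
    intro m n h
    induction n, h using Nat.le_induction with
    | base =>
      rw [show (homOfLE le_rfl : m ⟶ m).op = 𝟙 _ from rfl, F.map_id, Pointed.Hom.id_toFun',
        smashMap_id]
    | succ n hmn ih =>
      rw [← ih, ← hx n, smashMap_comp _ _ _ _ _ (F.map _).map_point, ← Pointed.Hom.comp_toFun',
        ← F.map_comp]
      rfl
  intro d d' u
  rw [show u = (homOfLE (leOfHom u.unop)).op from Quiver.Hom.unop_inj (Subsingleton.elim _ _)]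
  exact key _ _ _

theorem glimMap_surjective_of_mittagLeffler {F : ℕᵒᵖ ⥤ Pointed.{w}} (hF : MittagLeffler F)
    {A B C : Type*} [AddCommGroup A] [AddCommGroup B] [AddCommGroup C] {α : A →+ B} {β : B →+ C}
    (hα : Function.Injective α) (hαβ : Function.Exact α β) (hβ : Function.Surjective β) :
    Function.Surjective (glimMap F β) := by
  intro c
  obtain ⟨b, hb, hsucc⟩ := exists_seq_of_forall_exists_succ
    (fun n => eventualLifts F β c (Opposite.op n))
    (fun n => smashMap _ _ (F.map (homOfLE n.le_succ).op).toFun B)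
    (eventualLifts_nonempty hF.isMittagLeffler hβ c _)
    (fun n _ => exists_smashMap_eq_of_mem_eventualLifts hF.isMittagLeffler hα hαβ hβ c _)
  exact ⟨⟨fun d => b d.unop, mem_glim_of_succ F hsucc⟩,
    Subtype.ext (funext fun d => (hb d.unop).1)⟩

/-- Let `F : ℕᵒᵖ ⥤ Set_*` be a tower of pointed sets and `0 → A → B → C → 0` a short
exact sequence of abelian groups.  Then the induced sequences
`0 → G(X,A) → G(X,B) → G(X,C)` and `0 → H(X,A) → H(X,B) → H(X,C)` are exact.
If moreover `F` satisfies the Mittag-Leffler condition, then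
`0 → G(X,A) → G(X,B) → G(X,C) → 0` and `0 → H(X,A) → H(X,B) → H(X,C) → 0` are
exact. -/
theorem stmt13 (F : ℕᵒᵖ ⥤ Pointed.{w}) {A B C : Type v}
    [AddCommGroup A] [AddCommGroup B] [AddCommGroup C]
    (α : A →+ B) (β : B →+ C)
    (hα : Function.Injective α) (hαβ : Function.Exact α β)
    (hβ : Function.Surjective β) :
    (Function.Injective (glimMap F α) ∧
      Function.Exact (glimMap F α) (glimMap F β) ∧
      Function.Injective (Hmap F α) ∧
      Function.Exact (Hmap F α) (Hmap F β)) ∧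
    (MittagLeffler F →
      (Function.Surjective (glimMap F β) ∧ Function.Surjective (Hmap F β))) := by
  refine ⟨⟨glimMap_injective F hα, glimMap_exact F hα hαβ, Hmap_injective F hα,
    Hmap_exact F hα hαβ hβ⟩, fun hF => ?_⟩
  have hG := glimMap_surjective_of_mittagLeffler hF hα hαβ hβ
  exact ⟨hG, Hmap_surjective F hG⟩
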